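/- arXiv:1902.04372 — 8 statements merged into one kernel-verified Lean document; each statement's English description precedes it below -/
import Mathlib

section
/- Let q be a prime power, λ a positive divisor of q-1, m = 2h with h ≥ 2, and n = (q^m-1)/λ. If λ is odd, then for an integer i with 1 ≤ i ≤ (q^{h+1}-1)/λ, the congruence i·q^h ≡ i (mod n) holds if and only if (q^h + 1) divides i. -/
theorem Nat.coprime_add_one_of_dvd_sub_one {a lam : ℕ} (hodd : Odd lam) (hdvd : lam ∣ a - 1) :
    Nat.Coprime (a + 1) lam := by
  obtain ⟨d, hd⟩ := hdvd
  rcases Nat.eq_zero_or_pos a with rfl | ha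
  · exact Nat.coprime_one_left lam
  have hsucc : a + 1 = 2 + lam * d := by omega
  rw [hsucc, Nat.coprime_add_mul_left_left]
  exact Nat.coprime_two_left.mpr hodd

/-- With `a - 1 = lam * d`, the modulus is `d * (a + 1)` and `i * a - i = d * (i * lam)`, so the
congruence says `a + 1 ∣ i * lam`. -/
theorem Nat.mul_modEq_self_iff_add_one_dvd {a lam i : ℕ} (ha : 2 ≤ a) (hodd : Odd lam)
    (hdvd : lam ∣ a - 1) : i * a ≡ i [MOD (a ^ 2 - 1) / lam] ↔ a + 1 ∣ i := by
  have hcop := Nat.coprime_add_one_of_dvd_sub_one hodd hdvd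
  obtain ⟨d, hd⟩ := hdvd
  have hd0 : 0 < d := Nat.pos_of_ne_zero (by rintro rfl; omega)
  have hmod : (a ^ 2 - 1) / lam = d * (a + 1) := by
    rw [← one_pow 2, Nat.sq_sub_sq, hd, mul_left_comm, Nat.mul_div_cancel_left _ hodd.pos]
    ring
  have hsub : i * a - i = d * (i * lam) := by
    rw [← Nat.mul_sub_one, hd]; ring
  rw [hmod, Nat.ModEq.comm, Nat.modEq_iff_dvd' (Nat.le_mul_of_pos_right i (by omega)), hsub,
    Nat.mul_dvd_mul_iff_left hd0]
  exact hcop.dvd_mul_right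

theorem stmt_2_general (q lam h n i : ℕ) (hq : ∃ p k : ℕ, p.Prime ∧ 0 < k ∧ q = p ^ k)
    (hodd : Odd lam) (hdvd : lam ∣ q - 1) (hh : 2 ≤ h)
    (hn : n = (q ^ (2 * h) - 1) / lam) :
    i * q ^ h ≡ i [MOD n] ↔ (q ^ h + 1) ∣ i := by
  obtain ⟨p, k, hp, hk, rfl⟩ := hq
  have hq2 : 2 ≤ p ^ k := IsPrimePow.two_le ⟨p, k, hp.prime, hk, rfl⟩
  have ha : 2 ≤ (p ^ k) ^ h := Nat.one_lt_pow (by omega) hq2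
  have hdvd' : lam ∣ (p ^ k) ^ h - 1 := by
    simpa only [one_pow] using hdvd.trans (Nat.sub_dvd_pow_sub_pow (p ^ k) 1 h)
  rw [hn, pow_mul']
  exact Nat.mul_modEq_self_iff_add_one_dvd ha hodd hdvd'

/-- For λ odd, i·q^h ≡ i (mod n) iff (q^h + 1) ∣ i. -/
theorem stmt_2 (q lam h n i : ℕ) (hq : ∃ p k : ℕ, p.Prime ∧ 0 < k ∧ q = p ^ k)
    (hodd : Odd lam) (hlam : 0 < lam) (hdvd : lam ∣ q - 1) (hh : 2 ≤ h)
    (hn : n = (q ^ (2 * h) - 1) / lam)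
    (hi1 : 1 ≤ i) (hi2 : i ≤ (q ^ (h + 1) - 1) / lam) :
    i * q ^ h ≡ i [MOD n] ↔ (q ^ h + 1) ∣ i :=
  stmt_2_general q lam h n i hq hodd hdvd hh hn
end

section
/- Let q be a prime power, λ an even positive divisor of q-1 (so q is odd), m = 2h with h ≥ 2, and n = (q^m-1)/λ. For an integer i with 1 ≤ i ≤ (q^{h+1}-1)/λ, the congruence i·q^h ≡ i (mod n) holds if and only if (q^h+1)/2 divides i. -/
/-!
Write `Q = q^h`. Since `λ ∣ q - 1 ∣ Q - 1` we have `Q - 1 = λ s`, and then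
`n = (Q - 1)(Q + 1)/λ = s (Q + 1)`. With `λ = 2l`, `Q + 1 = 2c` where `c = l s + 1`, so
`i Q ≡ i (mod n)` becomes `2 s c ∣ 2 s l i`, i.e. `c ∣ l i`, and `c` is coprime to `l`.
-/

namespace Nat

theorem mul_modEq_self_iff_dvd {Q : ℕ} (hQ : 1 ≤ Q) (i n : ℕ) :
    i * Q ≡ i [MOD n] ↔ n ∣ i * (Q - 1) := by
  rw [ModEq.comm, modEq_iff_dvd' (le_mul_of_one_le_right' hQ), Nat.mul_sub_one]

theorem mul_mul_add_one_dvd_mul_mul_iff (l s i : ℕ) :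
    s * (l * s + 1) ∣ s * (l * i) ↔ l * s + 1 ∣ i := by
  rcases s.eq_zero_or_pos with rfl | hs
  · simp
  have hcop : Coprime (l * s + 1) l := (coprime_mul_left_add_left 1 l s).mpr (coprime_one_left l)
  rw [Nat.mul_dvd_mul_iff_left hs, hcop.dvd_mul_left]

theorem mul_modEq_self_iff_half_succ_dvd {Q lam n : ℕ} (hQ : Odd Q) (hlam : Even lam)
    (hdvd : lam ∣ Q - 1) (hn : n = (Q ^ 2 - 1) / lam) (i : ℕ) :
    i * Q ≡ i [MOD n] ↔ (Q + 1) / 2 ∣ i := by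
  obtain ⟨l, rfl⟩ := hlam
  set s := (Q - 1) / (l + l)
  have hQs : Q - 1 = (l + l) * s := (Nat.mul_div_cancel' hdvd).symm
  have hns : n = s * (Q + 1) := by
    rw [hn, ← one_pow 2, Nat.sq_sub_sq, one_pow, mul_comm, Nat.mul_div_right_comm hdvd]
  have hQe : Q = 2 * (l * s) + 1 := by
    have := hQ.pos
    rw [show (l + l) * s = 2 * (l * s) by ring] at hQs
    omega
  rw [mul_modEq_self_iff_dvd hQ.pos, hns, hQs, hQe,
    show (2 * (l * s) + 1 + 1) / 2 = l * s + 1 by omega,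
    show s * (2 * (l * s) + 1 + 1) = 2 * (s * (l * s + 1)) by ring,
    show i * ((l + l) * s) = 2 * (s * (l * i)) by ring,
    Nat.mul_dvd_mul_iff_left two_pos, mul_mul_add_one_dvd_mul_mul_iff]

end Nat

theorem stmt_3_general (q lam h n i : ℕ)
    (hqodd : Odd q) (heven : Even lam) (hdvd : lam ∣ q - 1)
    (hn : n = (q ^ (2 * h) - 1) / lam) :
    i * q ^ h ≡ i [MOD n] ↔ ((q ^ h + 1) / 2) ∣ i := by
  rw [mul_comm, pow_mul] at hn
  exact Nat.mul_modEq_self_iff_half_succ_dvd hqodd.pow heven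
    (hdvd.trans (Nat.sub_one_dvd_pow_sub_one q h)) hn i

/-- For λ even (so q odd), i·q^h ≡ i (mod n) iff (q^h + 1)/2 ∣ i. -/
theorem stmt_3 (q lam h n i : ℕ) (hq : ∃ p k : ℕ, p.Prime ∧ 0 < k ∧ q = p ^ k)
    (hqodd : Odd q) (heven : Even lam) (hlam : 0 < lam) (hdvd : lam ∣ q - 1) (hh : 2 ≤ h)
    (hn : n = (q ^ (2 * h) - 1) / lam)
    (hi1 : 1 ≤ i) (hi2 : i ≤ (q ^ (h + 1) - 1) / lam) :
    i * q ^ h ≡ i [MOD n] ↔ ((q ^ h + 1) / 2) ∣ i :=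
  stmt_3_general q lam h n i hqodd heven hdvd hn
end

section
/- Let q be a prime power, λ a positive divisor of q-1, m = 2h ≥ 4, and n = (q^m-1)/λ. For every integer i with 1 ≤ i ≤ (q^{h+1}-1)/λ, the size of the q-cyclotomic coset of i modulo n (i.e., the least positive integer ℓ such that i·q^ℓ ≡ i (mod n)) is either h or m. -/
/-!
The least such `ℓ` is the minimal period of `x ↦ x * q` at `i` in `ZMod n`, so it divides
`m = 2h`; a divisor of `2h` other than `h` and `2h` is smaller than `h`. But then `n` divides
the positive number `i (q^ℓ - 1)`, and
`q^{2h} - 1 = n λ ≤ i λ (q^{h-1} - 1) ≤ (q^{h+1} - 1)(q^{h-1} - 1) < q^{2h} - 1`.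
-/

open Function

theorem Function.isLeast_minimalPeriod {α : Type*} {f : α → α} {x : α}
    (hx : x ∈ periodicPts f) :
    IsLeast {l | 0 < l ∧ IsPeriodicPt f l x} (minimalPeriod f x) :=
  ⟨⟨minimalPeriod_pos_of_mem_periodicPts hx, isPeriodicPt_minimalPeriod f x⟩,
    fun _ hl => hl.2.minimalPeriod_le hl.1⟩

theorem Nat.lt_of_dvd_two_mul {a b : ℕ} (hb : 0 < b) (hab : a ∣ 2 * b) (h₁ : a ≠ b)
    (h₂ : a ≠ 2 * b) : a < b := by
  by_contra! hba
  exact h₂ (Nat.eq_of_dvd_of_lt_two_mul (by omega) hab (by omega)).symm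

theorem Nat.sub_one_mul_sub_one_lt {a b : ℕ} (ha : 2 ≤ a) (hb : 1 ≤ b) :
    (a - 1) * (b - 1) < a * b - 1 := by
  obtain ⟨a, rfl⟩ : ∃ a', a = a' + 2 := ⟨a - 2, by omega⟩
  obtain ⟨b, rfl⟩ : ∃ b', b = b' + 1 := ⟨b - 1, by omega⟩
  rw [show a + 2 - 1 = a + 1 by omega, Nat.add_sub_cancel,
    show (a + 2) * (b + 1) = (a + 1) * b + a + b + 2 by ring]
  omega

namespace CyclotomicCoset

variable {n q i l : ℕ}

theorem isPeriodicPt_mul_iff :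
    IsPeriodicPt (· * (q : ZMod n)) l (i : ZMod n) ↔ i * q ^ l ≡ i [MOD n] := by
  rw [IsPeriodicPt, IsFixedPt, mul_right_iterate_apply, ← ZMod.natCast_eq_natCast_iff]
  push_cast
  rfl

theorem isLeast_minimalPeriod (h : i * q ^ l ≡ i [MOD n]) (hl : 0 < l) :
    IsLeast {l | 0 < l ∧ i * q ^ l ≡ i [MOD n]}
      (minimalPeriod (· * (q : ZMod n)) (i : ZMod n)) := by
  simpa only [isPeriodicPt_mul_iff] using
    Function.isLeast_minimalPeriod (mk_mem_periodicPts hl (isPeriodicPt_mul_iff.2 h))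

theorem le_mul_pow_sub_one (hq : 2 ≤ q) (hi : 0 < i) (hl : 0 < l)
    (h : i * q ^ l ≡ i [MOD n]) : n ≤ i * (q ^ l - 1) := by
  have hql : 1 < q ^ l := Nat.one_lt_pow hl.ne' hq
  refine Nat.le_of_dvd (Nat.mul_pos hi (by omega)) ?_
  rw [Nat.mul_sub_one]
  exact (Nat.modEq_iff_dvd' (Nat.le_mul_of_pos_right i (by omega))).1 h.symm

end CyclotomicCoset

open CyclotomicCoset in
/-- For m = 2h ≥ 4, the size of the q-cyclotomic coset of i modulo n, i.e., the
least positive ℓ with i·q^ℓ ≡ i (mod n), is either h or m = 2h. -/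
theorem stmt_4 (q lam h n : ℕ) (hq : ∃ p k : ℕ, p.Prime ∧ 0 < k ∧ q = p ^ k)
    (hlam : 0 < lam) (hdvd : lam ∣ q - 1) (hh : 2 ≤ h)
    (hn : n = (q ^ (2 * h) - 1) / lam) :
    ∀ i : ℕ, 1 ≤ i → i ≤ (q ^ (h + 1) - 1) / lam →
      ∃ ℓ : ℕ, (ℓ = h ∨ ℓ = 2 * h) ∧
        IsLeast {l : ℕ | 0 < l ∧ i * q ^ l ≡ i [MOD n]} ℓ := by
  intro i hi hi_le
  have hq_two : 2 ≤ q := by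
    obtain ⟨p, k, hp, hk, rfl⟩ := hq
    exact Nat.one_lt_pow hk.ne' hp.two_le
  have hn_lam : n * lam = q ^ (2 * h) - 1 :=
    hn ▸ Nat.div_mul_cancel (hdvd.trans (by simpa using Nat.sub_dvd_pow_sub_pow q 1 (2 * h)))
  have hper : i * q ^ (2 * h) ≡ i [MOD n] := by
    simpa using ((Nat.modEq_sub (Nat.one_le_pow _ _ (by omega))).of_dvd
      (Dvd.intro lam hn_lam)).mul_left i
  set L := minimalPeriod (· * (q : ZMod n)) (i : ZMod n)
  have hleast : IsLeast _ L := isLeast_minimalPeriod hper (by omega)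
  refine ⟨L, ?_, hleast⟩
  by_contra! hL
  have hL_lt : L < h :=
    Nat.lt_of_dvd_two_mul (by omega) (isPeriodicPt_mul_iff.2 hper).minimalPeriod_dvd hL.1 hL.2
  have hn_le := le_mul_pow_sub_one hq_two hi hleast.1.1 hleast.1.2
  refine lt_irrefl (q ^ (2 * h) - 1) ?_
  calc q ^ (2 * h) - 1 = n * lam := hn_lam.symm
    _ ≤ i * (q ^ L - 1) * lam := Nat.mul_le_mul_right lam hn_le
    _ = i * lam * (q ^ L - 1) := by ring
    _ ≤ (q ^ (h + 1) - 1) * (q ^ (h - 1) - 1) :=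
      Nat.mul_le_mul ((Nat.le_div_iff_mul_le hlam).1 hi_le)
        (Nat.sub_le_sub_right (Nat.pow_le_pow_right (by omega) (by omega)) 1)
    _ < q ^ (h + 1) * q ^ (h - 1) - 1 :=
      Nat.sub_one_mul_sub_one_lt (Nat.one_lt_pow (by omega) hq_two)
        (Nat.one_le_pow _ _ (by omega))
    _ = q ^ (2 * h) - 1 := by rw [← pow_add]; congr 2; omega
end

section
/- Let q be a prime power, λ a positive divisor of q-1, m ≥ 2, and n = (q^m-1)/λ. Let 1 ≤ i ≤ n-1 have q-adic expansion i = Σ_{ℓ=0}^{m-1} i_ℓ q^ℓ with 0 ≤ i_ℓ ≤ q-1. If i is the smallest element of its q-cyclotomic coset modulo n (a coset leader), then i_{m-1} ≤ (q-1)/λ - 1 and i_ℓ ≥ i_{m-1} for all 0 ≤ ℓ ≤ m-2. -/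
/-!
Write `i = a + q^(ℓ+1) x` with `a = i mod q^(ℓ+1)`. Since `q^m ≡ 1 (mod n)`, multiplying by
`q^(m-1-ℓ)` rotates the `m` digits of `i` cyclically, so the coset leader `i` is at most
`a q^(m-1-ℓ) + x`. If the digit `i_ℓ` were smaller than the top digit `i_{m-1}`, this rotation
would be smaller than `(i_ℓ + 1) q^(m-1) ≤ i_{m-1} q^(m-1) ≤ i`. Hence every digit is at least
`i_{m-1}`; if moreover `i_{m-1} ≥ (q-1)/λ`, then `i ≥ ((q-1)/λ) Σ_ℓ q^ℓ = n`, which is impossible.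
-/

open Finset

namespace Nat

theorem sum_range_digit_mul_pow (q i M : ℕ) :
    ∑ ℓ ∈ range M, i / q ^ ℓ % q * q ^ ℓ = i % q ^ M := by
  induction M with
  | zero => simp [Nat.mod_one]
  | succ M ih => rw [sum_range_succ, ih, Nat.mod_pow_succ, mul_comm (q ^ M)]

theorem sub_one_mul_sum_range_pow {q : ℕ} (hq : 0 < q) (m : ℕ) :
    (q - 1) * ∑ ℓ ∈ range m, q ^ ℓ = q ^ m - 1 := by
  obtain ⟨x, rfl⟩ : ∃ x, q = x + 1 := ⟨q - 1, by omega⟩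
  have := geom_sum_mul_add x m
  rw [Nat.add_sub_cancel, mul_comm]
  omega

theorem mod_pow_succ_lt {q : ℕ} (hq : 0 < q) (i ℓ : ℕ) :
    i % q ^ (ℓ + 1) < (i / q ^ ℓ % q + 1) * q ^ ℓ := by
  have := Nat.mod_lt i (pow_pos hq ℓ)
  rw [Nat.mod_pow_succ, add_mul, one_mul, mul_comm]
  omega

theorem mul_pow_modEq_rotate {q n k j : ℕ} (hq : 0 < q) (hn : n ∣ q ^ (k + j) - 1) (i : ℕ) :
    i * q ^ j ≡ i % q ^ k * q ^ j + i / q ^ k [MOD n] := by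
  have hpow : q ^ (k + j) ≡ 1 [MOD n] :=
    ((Nat.modEq_iff_dvd' (Nat.one_le_pow _ _ hq)).2 hn).symm
  calc i * q ^ j = i % q ^ k * q ^ j + q ^ (k + j) * (i / q ^ k) := by
        conv_lhs => rw [← Nat.mod_add_div i (q ^ k)]
        ring
    _ ≡ i % q ^ k * q ^ j + 1 * (i / q ^ k) [MOD n] := (hpow.mul_right _).add_left _
    _ = i % q ^ k * q ^ j + i / q ^ k := by rw [one_mul]

theorem mul_sum_range_pow_dvd_pow_sub_one {q c : ℕ} (hq : 0 < q) (hc : c ∣ q - 1) (m : ℕ) :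
    c * ∑ ℓ ∈ range m, q ^ ℓ ∣ q ^ m - 1 :=
  sub_one_mul_sum_range_pow hq m ▸ Nat.mul_dvd_mul_right hc _

theorem mul_sum_range_pow_lt_pow {q c : ℕ} (hq : 1 < q) (hc : c ∣ q - 1) (m : ℕ) :
    c * ∑ ℓ ∈ range m, q ^ ℓ < q ^ m := by
  have hle : c * ∑ ℓ ∈ range m, q ^ ℓ ≤ q ^ m - 1 :=
    calc c * ∑ ℓ ∈ range m, q ^ ℓ ≤ (q - 1) * ∑ ℓ ∈ range m, q ^ ℓ :=
          Nat.mul_le_mul_right _ (Nat.le_of_dvd (Nat.sub_pos_of_lt hq) hc)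
      _ = q ^ m - 1 := sub_one_mul_sum_range_pow (zero_lt_one.trans hq) m
  have := Nat.one_le_pow m q (by omega)
  omega

theorem rotate_lt {q i ℓ j : ℕ} (hq : 0 < q) (hi : i < q ^ (ℓ + 1 + j)) :
    i % q ^ (ℓ + 1) * q ^ j + i / q ^ (ℓ + 1) < (i / q ^ ℓ % q + 1) * q ^ (ℓ + j) := by
  have hx : i / q ^ (ℓ + 1) < q ^ j :=
    Nat.div_lt_of_lt_mul (by rwa [← pow_add])
  calc i % q ^ (ℓ + 1) * q ^ j + i / q ^ (ℓ + 1)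
      < (i % q ^ (ℓ + 1) + 1) * q ^ j := by rw [add_one_mul]; omega
    _ ≤ (i / q ^ ℓ % q + 1) * q ^ ℓ * q ^ j :=
        Nat.mul_le_mul_right _ (mod_pow_succ_lt hq i ℓ)
    _ = (i / q ^ ℓ % q + 1) * q ^ (ℓ + j) := by rw [mul_assoc, ← pow_add]

end Nat

def IsCosetLeader (q n i : ℕ) : Prop := ∀ j, i ≤ i * q ^ j % n

namespace IsCosetLeader

variable {q n i m : ℕ}

theorem le_rotate (h : IsCosetLeader q n i) (hq : 0 < q) {k j : ℕ}
    (hn : n ∣ q ^ (k + j) - 1) : i ≤ i % q ^ k * q ^ j + i / q ^ k :=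
  calc i ≤ i * q ^ j % n := h j
    _ = (i % q ^ k * q ^ j + i / q ^ k) % n := Nat.mul_pow_modEq_rotate hq hn i
    _ ≤ i % q ^ k * q ^ j + i / q ^ k := Nat.mod_le _ _

theorem digit_top_le (h : IsCosetLeader q n i) (hq : 0 < q) (hn : n ∣ q ^ m - 1)
    (hi : i < q ^ m) {ℓ : ℕ} (hℓ : ℓ < m) : i / q ^ (m - 1) % q ≤ i / q ^ ℓ % q := by
  have hsplit : ℓ + 1 + (m - 1 - ℓ) = m := by omega
  by_contra! hlt
  have hrot := h.le_rotate hq (k := ℓ + 1) (j := m - 1 - ℓ) (by rwa [hsplit])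
  have hrot_lt := Nat.rotate_lt hq (j := m - 1 - ℓ) (by rwa [hsplit])
  rw [show ℓ + (m - 1 - ℓ) = m - 1 by omega] at hrot_lt
  have htop : (i / q ^ ℓ % q + 1) * q ^ (m - 1) ≤ i :=
    calc (i / q ^ ℓ % q + 1) * q ^ (m - 1) ≤ i / q ^ (m - 1) * q ^ (m - 1) :=
          Nat.mul_le_mul_right _ (hlt.trans_le (Nat.mod_le _ _))
      _ ≤ i := Nat.div_mul_le_self _ _
  omega

theorem digit_top_lt (h : IsCosetLeader q n i) (hq : 1 < q) {c : ℕ} (hc : c ∣ q - 1)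
    (hn : n = c * ∑ ℓ ∈ range m, q ^ ℓ) (hi : i < n) : i / q ^ (m - 1) % q < c := by
  subst hn
  have hnq := Nat.mul_sum_range_pow_dvd_pow_sub_one (zero_lt_one.trans hq) hc m
  have hiq := hi.trans (Nat.mul_sum_range_pow_lt_pow hq hc m)
  by_contra! hc_le
  have hdigits : ∀ ℓ ∈ range m, c * q ^ ℓ ≤ i / q ^ ℓ % q * q ^ ℓ := fun ℓ hℓ =>
    Nat.mul_le_mul_right _
      (hc_le.trans (h.digit_top_le (by omega) hnq hiq (mem_range.1 hℓ)))
  have : c * ∑ ℓ ∈ range m, q ^ ℓ ≤ i :=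
    calc c * ∑ ℓ ∈ range m, q ^ ℓ = ∑ ℓ ∈ range m, c * q ^ ℓ := mul_sum _ _ _
      _ ≤ ∑ ℓ ∈ range m, i / q ^ ℓ % q * q ^ ℓ := sum_le_sum hdigits
      _ = i % q ^ m := Nat.sum_range_digit_mul_pow q i m
      _ ≤ i := Nat.mod_le _ _
  omega

end IsCosetLeader

theorem stmt_5_general (q lam m n i : ℕ)
    (hdvd : lam ∣ q - 1)
    (hn : n = (q ^ m - 1) / lam) (hi1 : 1 ≤ i) (hi2 : i ≤ n - 1)
    (hleader : ∀ j : ℕ, i ≤ i * q ^ j % n) :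
    (i / q ^ (m - 1)) % q ≤ (q - 1) / lam - 1 ∧
    ∀ ℓ : ℕ, ℓ ≤ m - 2 → (i / q ^ (m - 1)) % q ≤ (i / q ^ ℓ) % q := by
  have hleader : IsCosetLeader q n i := hleader
  have hq : 1 < q := by
    by_contra! hq
    have : q ^ m ≤ 1 := pow_le_one₀ (Nat.zero_le q) hq
    rw [Nat.sub_eq_zero_of_le this, Nat.zero_div] at hn
    omega
  have hn' : n = (q - 1) / lam * ∑ ℓ ∈ range m, q ^ ℓ := by
    rw [hn, Nat.div_mul_right_comm hdvd, Nat.sub_one_mul_sum_range_pow (by omega)]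
  have hin : i < n := by omega
  have hm : 0 < m := Nat.pos_of_ne_zero (by rintro rfl; simp only [range_zero, sum_empty, mul_zero] at hn'; omega)
  have hc := Nat.div_dvd_of_dvd hdvd
  have hnq : n ∣ q ^ m - 1 := hn' ▸ Nat.mul_sum_range_pow_dvd_pow_sub_one (by omega) hc m
  have hiq : i < q ^ m := hin.trans (hn' ▸ Nat.mul_sum_range_pow_lt_pow hq hc m)
  exact ⟨Nat.le_sub_one_of_lt (hleader.digit_top_lt hq hc hn' hin),
    fun ℓ hℓ => hleader.digit_top_le (by omega) hnq hiq (by omega)⟩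

/-- If i is a q-cyclotomic coset leader modulo n = (q^m-1)/λ with q-adic digits
i_ℓ = (i / q^ℓ) % q, then i_{m-1} ≤ (q-1)/λ - 1 and i_ℓ ≥ i_{m-1} for ℓ ≤ m-2. -/
theorem stmt_5 (q lam m n i : ℕ) (hq : ∃ p k : ℕ, p.Prime ∧ 0 < k ∧ q = p ^ k)
    (hlam : 0 < lam) (hdvd : lam ∣ q - 1) (hm : 2 ≤ m)
    (hn : n = (q ^ m - 1) / lam) (hi1 : 1 ≤ i) (hi2 : i ≤ n - 1)
    (hleader : ∀ j : ℕ, i ≤ i * q ^ j % n) :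
    (i / q ^ (m - 1)) % q ≤ (q - 1) / lam - 1 ∧
    ∀ ℓ : ℕ, ℓ ≤ m - 2 → (i / q ^ (m - 1)) % q ≤ (i / q ^ ℓ) % q :=
  stmt_5_general q lam m n i hdvd hn hi1 hi2 hleader
end

section
/- Let q be an odd prime power, m ≥ 2 even, and n = (q^m-1)/2. Then δ₁ = (q^m - 1 - q^{m-1} - q^{m/2-1})/2 satisfies δ₁·q^{m/2} ≡ δ₁ (mod n), and m/2 is the least positive integer ℓ with δ₁·q^ℓ ≡ δ₁ (mod n); moreover δ₁ is the smallest element of its q-cyclotomic coset modulo n. -/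
/-!
Write `m = 2k + 2`, `Q = q ^ m = 2n + 1` and `2δ₁ = Q - 1 - q ^ (2k+1) - q ^ k`.
Since `q ^ (2k+2) ≡ 1` modulo `Q - 1 = 2n`, multiplying by `q ^ (j+1)` for `j ≤ k` gives
`2 δ₁ q ^ (j+1) ≡ Q - 1 - q ^ j - q ^ (k+1+j) (mod 2n)`, and the right-hand side lies in `[0, 2n)`.
So the coset of `δ₁` consists of the `k + 1` values `(Q - 1 - q ^ j - q ^ (k+1+j)) / 2`, which
strictly decrease in `j` and return to `δ₁` exactly at `j = k`.
-/

/-- For `j ≤ k` this is the residue of `δ₁ * q ^ (j + 1)` modulo `n = (q ^ (2k+2) - 1) / 2`;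
`δ₁` itself is `cosetResidue q k k`. -/
def cosetResidue (q k j : ℕ) : ℕ := (q ^ (2 * k + 2) - 1 - q ^ j - q ^ (k + 1 + j)) / 2

lemma two_mul_cosetResidue_add {q k j : ℕ} (hq : Odd q) (hq1 : 1 < q) (hj : j ≤ k) :
    2 * cosetResidue q k j + q ^ j + q ^ (k + 1 + j) + 1 = q ^ (2 * k + 2) := by
  have hlow : q ^ j < q ^ (2 * k + 1) := pow_lt_pow_right₀ hq1 (by omega)
  have hhigh : q ^ (k + 1 + j) ≤ q ^ (2 * k + 1) := Nat.pow_le_pow_right (by omega) (by omega)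
  have htop : 2 * q ^ (2 * k + 1) ≤ q ^ (2 * k + 2) := by
    rw [pow_succ q (2 * k + 1), mul_comm]
    exact Nat.mul_le_mul_left _ hq1
  obtain ⟨a, ha⟩ := hq.pow (n := j)
  obtain ⟨b, hb⟩ := hq.pow (n := k + 1 + j)
  obtain ⟨c, hc⟩ := hq.pow (n := 2 * k + 2)
  unfold cosetResidue
  omega

lemma cosetResidue_lt {q k j n : ℕ} (hq : Odd q) (hq1 : 1 < q) (hj : j ≤ k)
    (hn : 2 * n + 1 = q ^ (2 * k + 2)) : cosetResidue q k j < n := by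
  have := two_mul_cosetResidue_add hq hq1 hj
  have : 0 < q ^ j := pow_pos (by omega) j
  omega

lemma cosetResidue_lt_cosetResidue {q k i j : ℕ} (hq : Odd q) (hq1 : 1 < q) (hij : i < j)
    (hj : j ≤ k) : cosetResidue q k j < cosetResidue q k i := by
  have := two_mul_cosetResidue_add hq hq1 hj
  have := two_mul_cosetResidue_add hq hq1 (hij.le.trans hj)
  have : q ^ i < q ^ j := pow_lt_pow_right₀ hq1 hij
  have : q ^ (k + 1 + i) < q ^ (k + 1 + j) := pow_lt_pow_right₀ hq1 (by omega)
  omega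

lemma mul_pow_succ_modEq_cosetResidue {q k j n d : ℕ} (hq : Odd q) (hq1 : 1 < q) (hj : j ≤ k)
    (hn : 2 * n + 1 = q ^ (2 * k + 2)) (hd : d = cosetResidue q k k) :
    d * q ^ (j + 1) ≡ cosetResidue q k j [MOD n] := by
  rw [Nat.modEq_iff_dvd]
  refine ⟨1 + (q : ℤ) ^ j - q ^ (j + 1), mul_left_cancel₀ (two_ne_zero (α := ℤ)) ?_⟩
  have hv : (2 * cosetResidue q k j + q ^ j + q ^ (k + 1 + j) + 1 : ℤ) = q ^ (2 * k + 2) := by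
    exact_mod_cast two_mul_cosetResidue_add hq hq1 hj
  have hd' : (2 * d + q ^ k + q ^ (k + 1 + k) + 1 : ℤ) = q ^ (2 * k + 2) := by
    exact_mod_cast hd ▸ two_mul_cosetResidue_add hq hq1 le_rfl
  have hn' : (2 * n + 1 : ℤ) = q ^ (2 * k + 2) := by exact_mod_cast hn
  push_cast
  linear_combination hv - (q : ℤ) ^ (j + 1) * hd' - (1 + (q : ℤ) ^ j - (q : ℤ) ^ (j + 1)) * hn'

lemma mul_pow_modEq_self_of_eq_cosetResidue {q k n d : ℕ} (hq : Odd q) (hq1 : 1 < q)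
    (hn : 2 * n + 1 = q ^ (2 * k + 2)) (hd : d = cosetResidue q k k) :
    d * q ^ (k + 1) ≡ d [MOD n] := by
  have := mul_pow_succ_modEq_cosetResidue hq hq1 le_rfl hn hd
  rwa [← hd] at this

lemma modEq_mul_pow_of_modEq_mul {a c n : ℕ} (h : a * c ≡ a [MOD n]) (t : ℕ) :
    a * c ^ t ≡ a [MOD n] := by
  induction t with
  | zero => rw [pow_zero, mul_one]
  | succ t ih =>
    rw [pow_succ, ← mul_assoc]
    exact (ih.mul_right c).trans h

lemma exists_mul_pow_mod_eq_cosetResidue {q k n d : ℕ} (hq : Odd q) (hq1 : 1 < q)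
    (hn : 2 * n + 1 = q ^ (2 * k + 2)) (hd : d = cosetResidue q k k) (j : ℕ) :
    ∃ i ≤ k, d * q ^ j % n = cosetResidue q k i := by
  have hper := mul_pow_modEq_self_of_eq_cosetResidue hq hq1 hn hd
  have hred : d * q ^ j ≡ d * q ^ (j % (k + 1)) [MOD n] := by
    have := (modEq_mul_pow_of_modEq_mul hper (j / (k + 1))).mul_right (q ^ (j % (k + 1)))
    rwa [mul_assoc, ← pow_mul, ← pow_add, Nat.div_add_mod] at this
  rw [hred]
  by_cases hs : j % (k + 1) = 0
  · refine ⟨k, le_rfl, ?_⟩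
    rw [hs, pow_zero, mul_one, Nat.mod_eq_of_lt (hd ▸ cosetResidue_lt hq hq1 le_rfl hn), hd]
  · obtain ⟨i, hs⟩ : ∃ i, j % (k + 1) = i + 1 := ⟨j % (k + 1) - 1, by omega⟩
    have hi : i ≤ k := by
      have := Nat.mod_lt j (show 0 < k + 1 by omega)
      omega
    refine ⟨i, hi, ?_⟩
    rw [hs, mul_pow_succ_modEq_cosetResidue hq hq1 hi hn hd,
      Nat.mod_eq_of_lt (cosetResidue_lt hq hq1 hi hn)]

/-- For q odd, m even, n = (q^m-1)/2 and δ₁ = (q^m-1-q^{m-1}-q^{m/2-1})/2: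
m/2 is the least positive ℓ with δ₁·q^ℓ ≡ δ₁ (mod n), and δ₁ is the smallest
element of its q-cyclotomic coset modulo n. -/
theorem stmt_6 (q m n d : ℕ) (hq : ∃ p k : ℕ, p.Prime ∧ 0 < k ∧ q = p ^ k)
    (hqodd : Odd q) (hm : 2 ≤ m) (hme : Even m)
    (hn : n = (q ^ m - 1) / 2)
    (hd : d = (q ^ m - 1 - q ^ (m - 1) - q ^ (m / 2 - 1)) / 2) :
    IsLeast {l : ℕ | 0 < l ∧ d * q ^ l ≡ d [MOD n]} (m / 2) ∧
    ∀ j : ℕ, d ≤ d * q ^ j % n := by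
  have hq1 : 1 < q := by
    obtain ⟨p, k, hp, hk, rfl⟩ := hq
    exact Nat.one_lt_pow hk.ne' hp.one_lt
  obtain ⟨k, rfl⟩ : ∃ k, m = 2 * k + 2 := by obtain ⟨t, rfl⟩ := hme; exact ⟨t - 1, by omega⟩
  have hn' : 2 * n + 1 = q ^ (2 * k + 2) := by
    obtain ⟨c, hc⟩ := hqodd.pow (n := 2 * k + 2)
    omega
  have hd' : d = cosetResidue q k k := by
    rw [hd, cosetResidue, show k + 1 + k = 2 * k + 2 - 1 by omega, Nat.sub_right_comm _ (q ^ k)]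
    congr 4
    omega
  have hdn : d < n := hd' ▸ cosetResidue_lt hqodd hq1 le_rfl hn'
  rw [show (2 * k + 2) / 2 = k + 1 by omega]
  refine ⟨⟨⟨k.succ_pos, mul_pow_modEq_self_of_eq_cosetResidue hqodd hq1 hn' hd'⟩, ?_⟩,
    fun j => ?_⟩
  · rintro l ⟨hl0, hl⟩
    by_contra! hlk
    obtain ⟨j, rfl⟩ : ∃ j, l = j + 1 := ⟨l - 1, by omega⟩
    have hj : j < k := by omega
    have hmod := (mul_pow_succ_modEq_cosetResidue hqodd hq1 hj.le hn' hd').symm.trans hl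
    have heq := hmod.eq_of_lt_of_lt (cosetResidue_lt hqodd hq1 hj.le hn') hdn
    exact (cosetResidue_lt_cosetResidue hqodd hq1 hj le_rfl).ne (hd' ▸ heq.symm)
  · obtain ⟨i, hi, hj⟩ := exists_mul_pow_mod_eq_cosetResidue hqodd hq1 hn' hd' j
    rw [hj, hd']
    rcases hi.lt_or_eq with hik | rfl
    exacts [(cosetResidue_lt_cosetResidue hqodd hq1 hik le_rfl).le, le_rfl]
end

section
/- Let q be an odd prime power, m ≥ 2, and n = (q^m-1)/2. The largest q-cyclotomic coset leader modulo n is δ₁ = (q^m - 1 - q^{m-1} - q^{⌊(m-1)/2⌋})/2; that is, δ₁ is a coset leader, and every integer s with δ₁ < s < n satisfies [s·q^j]_n < s for some j ≥ 1. -/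
/-!
Put `N = q ^ m - 1 = 2 * n` and, for `s < n`, `f = N - 2 * s`. Since `2 * s ≡ -f [MOD N]`, we get
`2 * (s * q ^ j % n) = N - w` whenever `w ≡ f * q ^ j [MOD N]` and `0 < w < N`. So `s` is beaten
by one of its conjugates exactly when some `f * q ^ j` has a residue larger than `f`.

For `s = δ₁` we have `f = q ^ (m - 1) + q ^ t` with `t = (m - 1) / 2`, and multiplying by `q ^ j`
rotates both exponents modulo `m`; the rotated sum of two powers is never larger than `f`.
For `δ₁ < s < n`, `f` is even and `0 < f < q ^ (m - 1) + q ^ t`. Moving the leading `q`-digit of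
`f` (or of `f - q ^ (m - 1)` when `f > q ^ (m - 1)`) up to position `m - 1` gives a residue of
`f * q ^ j` lying strictly between `f` and `N`.
-/

theorem Nat.pow_modEq_pow_mod_pow_sub_one {q : ℕ} (hq : 0 < q) (m c : ℕ) :
    q ^ c ≡ q ^ (c % m) [MOD q ^ m - 1] := by
  have h : q ^ m ≡ 1 [MOD q ^ m - 1] := Nat.modEq_sub (Nat.one_le_pow _ _ hq)
  calc q ^ c = (q ^ m) ^ (c / m) * q ^ (c % m) := by rw [← pow_mul, ← pow_add, Nat.div_add_mod]
    _ ≡ 1 ^ (c / m) * q ^ (c % m) [MOD q ^ m - 1] := (h.pow _).mul_right _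
    _ = q ^ (c % m) := by rw [one_pow, one_mul]

theorem Nat.mod_eq_sub_of_add_modEq_zero {N x w : ℕ} (h : x + w ≡ 0 [MOD N]) (hw : 0 < w)
    (hwN : w < N) : x % N = N - w := by
  have hdvd : N ∣ x % N + w :=
    Nat.modEq_zero_iff_dvd.mp (((Nat.mod_modEq x N).add_right w).trans h)
  have hxN := Nat.mod_lt x (by omega : 0 < N)
  have := Nat.eq_of_dvd_of_lt_two_mul (by omega) hdvd (by omega)
  omega

theorem two_mul_mul_mod_eq_sub {n s f x w : ℕ} (hsf : 2 * s + f = 2 * n)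
    (hw : f * x ≡ w [MOD 2 * n]) (hw0 : 0 < w) (hwn : w < 2 * n) :
    2 * (s * x % n) = 2 * n - w := by
  rw [← Nat.mul_mod_mul_left, ← mul_assoc]
  refine Nat.mod_eq_sub_of_add_modEq_zero ?_ hw0 hwn
  calc 2 * s * x + w ≡ 2 * s * x + f * x [MOD 2 * n] := hw.symm.add_left _
    _ = 2 * n * x := by rw [← add_mul, hsf]
    _ ≡ 0 [MOD 2 * n] := Nat.modEq_zero_iff_dvd.mpr (dvd_mul_right _ _)

theorem pow_add_pow_le_pow_pred_add_pow {q m a b t : ℕ} (hq : 2 ≤ q) (ha : a < m) (hb : b < m)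
    (hab : a = m - 1 → b ≤ t) (hba : b = m - 1 → a ≤ t) :
    q ^ a + q ^ b ≤ q ^ (m - 1) + q ^ t := by
  have mono : ∀ {i k : ℕ}, i ≤ k → q ^ i ≤ q ^ k := fun h =>
    Nat.pow_le_pow_right (by omega) h
  by_cases ha' : a = m - 1
  · rw [ha']
    exact Nat.add_le_add_left (mono (hab ha')) _
  by_cases hb' : b = m - 1
  · rw [hb', add_comm]
    exact Nat.add_le_add_left (mono (hba hb')) _
  calc q ^ a + q ^ b ≤ q ^ (m - 2) + q ^ (m - 2) :=
        Nat.add_le_add (mono (by omega)) (mono (by omega))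
    _ = 2 * q ^ (m - 2) := (two_mul _).symm
    _ ≤ q * q ^ (m - 2) := Nat.mul_le_mul_right _ hq
    _ = q ^ (m - 1) := by rw [← pow_succ']; congr 1; omega
    _ ≤ q ^ (m - 1) + q ^ t := Nat.le_add_right _ _

theorem pow_mod_add_pow_mod_le {q m : ℕ} (hq : 2 ≤ q) (hm : 0 < m) (j : ℕ) :
    q ^ ((m - 1 + j) % m) + q ^ (((m - 1) / 2 + j) % m) ≤ q ^ (m - 1) + q ^ ((m - 1) / 2) := by
  have hjm := Nat.mod_lt j hm
  apply pow_add_pow_le_pow_pred_add_pow hq (Nat.mod_lt _ hm) (Nat.mod_lt _ hm) <;>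
  · rw [Nat.add_mod_eq_ite, Nat.add_mod_eq_ite, Nat.mod_eq_of_lt (by omega : m - 1 < m),
      Nat.mod_eq_of_lt (by omega : (m - 1) / 2 < m)]
    split_ifs <;> omega

theorem pow_pred_add_pow_half_lt {q m : ℕ} (hq : 3 ≤ q) (hm : 2 ≤ m) :
    q ^ (m - 1) + q ^ ((m - 1) / 2) < q ^ m - 1 := by
  have hB : q ≤ q ^ (m - 1) := Nat.le_self_pow (by omega) q
  have hT : q ^ ((m - 1) / 2) ≤ q ^ (m - 1) := Nat.pow_le_pow_right (by omega) (by omega)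
  have hqm : 3 * q ^ (m - 1) ≤ q ^ m := by
    rw [show m = m - 1 + 1 by omega, pow_succ', Nat.add_sub_cancel]
    exact Nat.mul_le_mul_right _ hq
  omega

theorem exists_le_mul_pow_of_lt_pow {q k f : ℕ} (hq : 2 ≤ q) (hf : 0 < f) (hfk : f < q ^ k) :
    ∃ j, 1 ≤ j ∧ q ^ k ≤ f * q ^ j ∧ (f + 1) * q ^ j ≤ q ^ (k + 1) := by
  set i := Nat.log q f
  have hi : q ^ i ≤ f := Nat.pow_log_le_self q hf.ne'
  have hi' : f < q ^ (i + 1) := Nat.lt_pow_succ_log_self hq f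
  have hik : i < k := (Nat.pow_lt_pow_iff_right (by omega)).mp (hi.trans_lt hfk)
  refine ⟨k - i, by omega, ?_, ?_⟩
  · calc q ^ k = q ^ i * q ^ (k - i) := by rw [← pow_add]; congr 1; omega
      _ ≤ f * q ^ (k - i) := Nat.mul_le_mul_right _ hi
  · calc (f + 1) * q ^ (k - i) ≤ q ^ (i + 1) * q ^ (k - i) := Nat.mul_le_mul_right _ hi'
      _ = q ^ (k + 1) := by rw [← pow_add]; congr 1; omega

theorem exists_mul_pow_modEq_gt_of_lt_pow_pred {q m f : ℕ} (hq : 2 ≤ q) (hm : 0 < m)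
    (hf : 0 < f) (hfm : f < q ^ (m - 1)) :
    ∃ j, 1 ≤ j ∧ ∃ w, f * q ^ j ≡ w [MOD q ^ m - 1] ∧ f < w ∧ w < q ^ m - 1 := by
  obtain ⟨j, hj, hlo, hhi⟩ := exists_le_mul_pow_of_lt_pow hq hf hfm
  rw [Nat.sub_add_cancel hm, add_mul, one_mul] at hhi
  have : q ≤ q ^ j := Nat.le_self_pow (by omega) q
  exact ⟨j, hj, f * q ^ j, rfl, by omega, by omega⟩

theorem exists_pow_pred_add_mul_pow_modEq_gt {q m g : ℕ} (hq : 3 ≤ q) (hm : 0 < m) (hg : 0 < g)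
    (hgt : g < q ^ ((m - 1) / 2)) :
    ∃ j, 1 ≤ j ∧ ∃ w, (q ^ (m - 1) + g) * q ^ j ≡ w [MOD q ^ m - 1] ∧
      q ^ (m - 1) + g < w ∧ w < q ^ m - 1 := by
  have mono : ∀ {i k : ℕ}, i ≤ k → q ^ i ≤ q ^ k := fun h =>
    Nat.pow_le_pow_right (by omega) h
  obtain ⟨j, hj, hlo, hhi⟩ :=
    exists_le_mul_pow_of_lt_pow (k := m - 1) (by omega) hg (hgt.trans_le (mono (by omega)))
  rw [Nat.sub_add_cancel hm, add_mul, one_mul] at hhi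
  have htj : (m - 1) / 2 ≤ j - 1 := by
    have : q ^ (m - 1) < q ^ ((m - 1) / 2 + j) :=
      hlo.trans_lt (by rw [pow_add]; exact Nat.mul_lt_mul_of_pos_right hgt (by positivity))
    have := (Nat.pow_lt_pow_iff_right (by omega)).mp this
    omega
  refine ⟨j, hj, q ^ (j - 1) + g * q ^ j, ?_, by have := mono htj; omega, ?_⟩
  · have hsplit : q ^ (m - 1) * q ^ j = q ^ m * q ^ (j - 1) := by
      rw [← pow_add, ← pow_add]; congr 1; omega
    have h1 : q ^ m ≡ 1 [MOD q ^ m - 1] := Nat.modEq_sub (Nat.one_le_pow _ _ (by omega))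
    rw [add_mul, hsplit]
    simpa using (h1.mul_right (q ^ (j - 1))).add_right (g * q ^ j)
  · have : 3 * q ^ (j - 1) ≤ q ^ j := by
      rw [show j = j - 1 + 1 by omega, pow_succ', Nat.add_sub_cancel]
      exact Nat.mul_le_mul_right _ hq
    have : 1 ≤ q ^ (j - 1) := Nat.one_le_pow _ _ (by omega)
    omega

theorem exists_mul_pow_modEq_gt {q m f : ℕ} (hq : 3 ≤ q) (hm : 0 < m) (hf : 0 < f)
    (hfq : f ≠ q ^ (m - 1)) (hfm : f < q ^ (m - 1) + q ^ ((m - 1) / 2)) :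
    ∃ j, 1 ≤ j ∧ ∃ w, f * q ^ j ≡ w [MOD q ^ m - 1] ∧ f < w ∧ w < q ^ m - 1 := by
  rcases lt_or_ge f (q ^ (m - 1)) with hlt | hge
  · exact exists_mul_pow_modEq_gt_of_lt_pow_pred (by omega) hm hf hlt
  · obtain ⟨g, rfl⟩ := Nat.exists_eq_add_of_le hge
    exact exists_pow_pred_add_mul_pow_modEq_gt hq hm (by omega) (by omega)

theorem le_mul_pow_mod {q m n d : ℕ} (hq : 3 ≤ q) (hm : 2 ≤ m) (hn : 2 * n = q ^ m - 1)
    (hd : 2 * d + (q ^ (m - 1) + q ^ ((m - 1) / 2)) = 2 * n) (j : ℕ) : d ≤ d * q ^ j % n := by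
  have hw := pow_mod_add_pow_mod_le (q := q) (m := m) (by omega) (by omega) j
  have hlt := pow_pred_add_pow_half_lt hq hm
  have hrot : (q ^ (m - 1) + q ^ ((m - 1) / 2)) * q ^ j ≡
      q ^ ((m - 1 + j) % m) + q ^ (((m - 1) / 2 + j) % m) [MOD 2 * n] := by
    rw [hn, add_mul, ← pow_add, ← pow_add]
    exact (Nat.pow_modEq_pow_mod_pow_sub_one (by omega) _ _).add
      (Nat.pow_modEq_pow_mod_pow_sub_one (by omega) _ _)
  have := two_mul_mul_mod_eq_sub hd hrot (by positivity) (by omega)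
  omega

theorem exists_mul_pow_mod_lt {q m n s : ℕ} (hq : 3 ≤ q) (hqodd : Odd q) (hm : 0 < m)
    (hn : 2 * n = q ^ m - 1) (hs : 2 * n < 2 * s + (q ^ (m - 1) + q ^ ((m - 1) / 2)))
    (hsn : s < n) : ∃ j, 1 ≤ j ∧ s * q ^ j % n < s := by
  have hodd : 2 * (n - s) ≠ q ^ (m - 1) := by
    obtain ⟨c, hc⟩ := hqodd.pow (n := m - 1)
    omega
  obtain ⟨j, hj, w, hw, hfw, hwN⟩ :=
    exists_mul_pow_modEq_gt (f := 2 * (n - s)) hq hm (by omega) hodd (by omega)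
  have := two_mul_mul_mod_eq_sub (s := s) (by omega) (hn ▸ hw) (by omega) (by omega)
  exact ⟨j, hj, by omega⟩

theorem stmt_7_general (q m n d : ℕ)
    (hqodd : Odd q) (hm : 2 ≤ m)
    (hn : n = (q ^ m - 1) / 2)
    (hd : d = (q ^ m - 1 - q ^ (m - 1) - q ^ ((m - 1) / 2)) / 2) :
    (∀ j : ℕ, d ≤ d * q ^ j % n) ∧
    ∀ s : ℕ, d < s → s < n → ∃ j : ℕ, 1 ≤ j ∧ s * q ^ j % n < s := by
  obtain rfl | hq : q = 1 ∨ 3 ≤ q := by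
    obtain ⟨c, rfl⟩ := hqodd
    omega
  · simp_all
  obtain ⟨a, ha⟩ := hqodd.pow (n := m)
  obtain ⟨b, hb⟩ := hqodd.pow (n := m - 1)
  obtain ⟨c, hc⟩ := hqodd.pow (n := (m - 1) / 2)
  have hlt := pow_pred_add_pow_half_lt hq hm
  have h2n : 2 * n = q ^ m - 1 := by omega
  have h2d : 2 * d + (q ^ (m - 1) + q ^ ((m - 1) / 2)) = 2 * n := by omega
  exact ⟨le_mul_pow_mod hq hm h2n h2d,
    fun s hds hsn => exists_mul_pow_mod_lt hq hqodd (by omega) h2n (by omega) hsn⟩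

/-- The largest q-cyclotomic coset leader modulo n = (q^m-1)/2 is
δ₁ = (q^m - 1 - q^{m-1} - q^{⌊(m-1)/2⌋})/2: δ₁ is a coset leader and every
integer δ₁ < s < n satisfies [s·q^j]_n < s for some j ≥ 1. -/
theorem stmt_7 (q m n d : ℕ) (hq : ∃ p k : ℕ, p.Prime ∧ 0 < k ∧ q = p ^ k)
    (hqodd : Odd q) (hm : 2 ≤ m)
    (hn : n = (q ^ m - 1) / 2)
    (hd : d = (q ^ m - 1 - q ^ (m - 1) - q ^ ((m - 1) / 2)) / 2) :
    (∀ j : ℕ, d ≤ d * q ^ j % n) ∧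
    ∀ s : ℕ, d < s → s < n → ∃ j : ℕ, 1 ≤ j ∧ s * q ^ j % n < s :=
  stmt_7_general q m n d hqodd hm hn hd
end

section
/- Let q be an odd prime power, m ≥ 2, and n = (q^m-1)/2. The second largest q-cyclotomic coset leader modulo n is δ₂ = (q^m - 1 - q^{m-1} - q^{⌊(m+1)/2⌋})/2, and its q-cyclotomic coset has size m. -/
/-!
Put `N = q ^ m - 1 = 2 * n`. Since `q` is invertible modulo `N`, `2 * (s * q ^ j % n)` and
`(N - 2 * s) * q ^ j % N` add up to `N` for `0 < s < n`; so `s` is a coset leader modulo `n` exactly when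
`y = N - 2 * s` is the largest element of its coset modulo `N`, and multiplication by `q` modulo `N`
rotates the `m` base-`q` digits of `y`.

For `δ₂` the complement is `q ^ (m - 1) + q ^ ((m + 1) / 2)`, and every non-trivial rotation of
these two digits is strictly smaller: this gives both the leader property and the coset size `m`.
Conversely, let an even `y` below that value be maximal among its rotations. Its top digit is `1`,
so `y = q ^ (m - 1) + z` with `z < q ^ ((m + 1) / 2)` odd. Rotating the leading digit of `z` to the
top forces that digit to sit at position `(m - 1) / 2` and then `z ≤ q ^ ((m - 1) / 2) + 1`; parity
gives `z = q ^ ((m - 1) / 2)`, the complement of `δ₁`.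
-/

namespace Nat

variable {q m : ℕ}

theorem pow_modEq_one_pow_sub_one (hq : 0 < q) : q ^ m ≡ 1 [MOD q ^ m - 1] :=
  Nat.modEq_sub (Nat.one_le_pow _ _ hq)

theorem pow_modEq_pow_mod (hq : 0 < q) (i : ℕ) : q ^ i ≡ q ^ (i % m) [MOD q ^ m - 1] := by
  conv_lhs => rw [← Nat.div_add_mod i m, pow_add, pow_mul]
  simpa using ((pow_modEq_one_pow_sub_one hq).pow (i / m)).mul_right (q ^ (i % m))

theorem coprime_pow_sub_one (hq : 0 < q) (hm : 0 < m) : Nat.Coprime q (q ^ m - 1) :=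
  ((Nat.coprime_self_sub_right (Nat.one_le_pow _ _ hq)).mpr (Nat.coprime_one_right _)).coprime_dvd_left
      (dvd_pow_self q hm.ne')

theorem mod_add_mod_eq_of_add_eq {x y c M : ℕ} (hxy : x + y = M) (hx : ¬ M ∣ x * c) :
    x * c % M + y * c % M = M := by
  have hM : 0 < M := Nat.pos_of_ne_zero (by rintro rfl; simp_all)
  have hsum : M ∣ x * c % M + y * c % M := by
    rw [Nat.dvd_iff_mod_eq_zero, ← Nat.add_mod, ← add_mul, hxy, Nat.mul_mod_right]
  obtain ⟨k, hk⟩ := hsum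
  have hx0 : 0 < x * c % M := Nat.pos_of_ne_zero (mt Nat.dvd_of_mod_eq_zero hx)
  have := Nat.mod_lt (x * c) hM
  have := Nat.mod_lt (y * c) hM
  rcases k with _ | _ | k
  · omega
  · omega
  · nlinarith

theorem pow_add_pow_add_pow_pred_le (hq : 3 ≤ q) {a b c : ℕ} (ha : a < c) (hb : b < c) :
    q ^ a + q ^ b + q ^ (c - 1) ≤ q ^ c := by
  have h1 : q ^ a ≤ q ^ (c - 1) := Nat.pow_le_pow_right (by omega) (by omega)
  have h2 : q ^ b ≤ q ^ (c - 1) := Nat.pow_le_pow_right (by omega) (by omega)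
  have h3 : q ^ c = q ^ (c - 1) * q := by rw [← pow_succ]; congr 1; omega
  have h4 : q ^ (c - 1) * 3 ≤ q ^ (c - 1) * q := Nat.mul_le_mul_left _ hq
  omega

theorem pow_add_pow_lt (hq : 3 ≤ q) (hm : 2 ≤ m) {a b : ℕ} (ha : a < m) (hb : b < m) :
    q ^ a + q ^ b < q ^ m - 1 := by
  have := pow_add_pow_add_pow_pred_le hq ha hb
  have := Nat.le_self_pow (show m - 1 ≠ 0 by omega) q
  omega

theorem pow_add_pow_mul_pow_mod (hq : 3 ≤ q) (hm : 2 ≤ m) (a b j : ℕ) :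
    (q ^ a + q ^ b) * q ^ j % (q ^ m - 1) = q ^ ((a + j) % m) + q ^ ((b + j) % m) := by
  have hm0 : 0 < m := by omega
  have hq0 : 0 < q := by omega
  refine Nat.mod_eq_of_modEq ?_ (pow_add_pow_lt hq hm (Nat.mod_lt _ hm0) (Nat.mod_lt _ hm0))
  rw [add_mul, ← pow_add, ← pow_add]
  exact (pow_modEq_pow_mod hq0 _).add (pow_modEq_pow_mod hq0 _)

theorem pow_pred_add_pow_mul_pow_mod_lt (hq : 3 ≤ q) (hm : 2 ≤ m) {j : ℕ} (hj0 : 0 < j)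
    (hjm : j < m) :
    (q ^ (m - 1) + q ^ ((m + 1) / 2)) * q ^ j % (q ^ m - 1) < q ^ (m - 1) + q ^ ((m + 1) / 2) := by
  rw [pow_add_pow_mul_pow_mod hq hm]
  have hfirst : (m - 1 + j) % m = j - 1 := by
    rw [show m - 1 + j = m + (j - 1) by omega, Nat.add_mod_left, Nat.mod_eq_of_lt (by omega)]
  rw [hfirst]
  set r := ((m + 1) / 2 + j) % m with hr_def
  have hr : r = (m + 1) / 2 + j ∨ r = (m + 1) / 2 + j - m := by
    rcases Nat.lt_or_ge ((m + 1) / 2 + j) m with h | h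
    · exact .inl (Nat.mod_eq_of_lt h)
    · right
      rw [hr_def, Nat.mod_eq_sub_mod h, Nat.mod_eq_of_lt (by omega)]
  rcases Nat.lt_or_ge r (m - 1) with hr_lt | hr_ge
  · have := pow_add_pow_add_pow_pred_le hq (show j - 1 < m - 1 by omega) hr_lt
    have := Nat.one_le_pow (m - 1 - 1) q (by omega)
    omega
  · -- the second digit has reached the top position, so the first lies below `(m + 1) / 2`
    have hr_top : r = m - 1 := by have := Nat.mod_lt ((m + 1) / 2 + j) (show 0 < m by omega); omega
    have : q ^ (j - 1) < q ^ ((m + 1) / 2) := Nat.pow_lt_pow_right (by omega) (by omega)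
    rw [hr_top]
    omega

theorem pow_pred_add_pow_mul_pow_mod_le (hq : 3 ≤ q) (hm : 2 ≤ m) (j : ℕ) :
    (q ^ (m - 1) + q ^ ((m + 1) / 2)) * q ^ j % (q ^ m - 1) ≤ q ^ (m - 1) + q ^ ((m + 1) / 2) := by
  rw [Nat.ModEq.mul_left _ (pow_modEq_pow_mod (m := m) (by omega) j)]
  rcases Nat.eq_zero_or_pos (j % m) with h | h
  · rw [h, pow_zero, mul_one, Nat.mod_eq_of_lt (pow_add_pow_lt hq hm (by omega) (by omega))]
  · exact (pow_pred_add_pow_mul_pow_mod_lt hq hm h (Nat.mod_lt _ (by omega))).le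

theorem pow_pred_le_of_mul_mod_le (hq : 2 ≤ q) (hm : 0 < m) {y : ℕ} (hy : 0 < y)
    (h : y * q % (q ^ m - 1) ≤ y) : q ^ (m - 1) ≤ y := by
  by_contra! hlt
  have hqm : q ^ m = q ^ (m - 1) * q := by rw [← pow_succ]; congr 1; omega
  have hyq : (y + 1) * q ≤ q ^ (m - 1) * q := Nat.mul_le_mul_right _ hlt
  rw [Nat.mod_eq_of_lt (by rw [add_mul] at hyq; omega)] at h
  nlinarith

theorem pow_pred_add_mul_pow_mod (hq : 3 ≤ q) {k z : ℕ} (hk : k < m) (hz : z < q ^ k) :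
    (q ^ (m - 1) + z) * q ^ (m - k) % (q ^ m - 1) = q ^ (m - 1 - k) + z * q ^ (m - k) := by
  have hsplit : q ^ (m - k) = q ^ (m - 1 - k) * q := by rw [← pow_succ]; congr 1; omega
  have hqm : q ^ (m - 1) * q ^ (m - k) = q ^ (m - 1 - k) * q ^ m := by
    rw [← pow_add, ← pow_add]; congr 1; omega
  have hzq : (z + 1) * q ^ (m - k) ≤ q ^ k * q ^ (m - k) := Nat.mul_le_mul_right _ hz
  rw [← pow_add, show k + (m - k) = m by omega] at hzq
  have h3 : q ^ (m - 1 - k) * 3 ≤ q ^ (m - 1 - k) * q := Nat.mul_le_mul_left _ hq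
  have h4 : 0 < q ^ (m - 1 - k) := pow_pos (by omega) _
  refine Nat.mod_eq_of_modEq ?_ (by rw [add_mul] at hzq; omega)
  rw [add_mul, hqm]
  simpa using ((pow_modEq_one_pow_sub_one (m := m) (by omega)).mul_left (q ^ (m - 1 - k))).add_right
    (z * q ^ (m - k))

theorem le_pow_add_one_of_pow_add_mul_pow_succ_le (hq : 3 ≤ q) {k e z : ℕ} (hke : k ≤ e + 1)
    (h : q ^ e + z * q ^ (e + 1) ≤ q ^ k * q ^ (e + 1) + z) : z ≤ q ^ k + 1 := by
  by_contra! hz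
  obtain ⟨w, rfl⟩ := Nat.exists_eq_add_of_lt hz
  have hw : w ≤ w * q ^ (e + 1) := Nat.le_mul_of_pos_right w (pow_pos (by omega) _)
  have hk : q ^ k ≤ q ^ (e + 1) := Nat.pow_le_pow_right (by omega) hke
  have he : 0 < q ^ e := pow_pos (by omega) _
  have hq_le : q ≤ q ^ (e + 1) := Nat.le_self_pow (Nat.succ_ne_zero e) q
  nlinarith

theorem eq_pow_pred_add_pow_of_forall_mul_pow_mod_le (hq : 3 ≤ q) (hq_odd : Odd q) (hm : 2 ≤ m)
    {y : ℕ} (hy : Even y) (hy0 : 0 < y) (hlt : y < q ^ (m - 1) + q ^ ((m + 1) / 2))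
    (hmax : ∀ j, y * q ^ j % (q ^ m - 1) ≤ y) :
    y = q ^ (m - 1) + q ^ ((m - 1) / 2) := by
  obtain ⟨z, rfl⟩ := Nat.exists_eq_add_of_le
    (pow_pred_le_of_mul_mod_le (q := q) (m := m) (by omega) (by omega) hy0 (by simpa using hmax 1))
  have hz_odd : Odd z := by
    obtain ⟨a, ha⟩ : Odd (q ^ (m - 1)) := hq_odd.pow
    obtain ⟨b, hb⟩ := hy
    exact ⟨b - a - 1, by omega⟩
  set v := (m - 1) / 2
  have hzv : z < q ^ (v + 1) := by rw [show v + 1 = (m + 1) / 2 by omega]; omega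
  obtain ⟨K, hzK_le, hzK_lt⟩ : ∃ K, q ^ K ≤ z ∧ z < q ^ (K + 1) :=
    ⟨Nat.log q z, Nat.pow_log_le_self q hz_odd.pos.ne', Nat.lt_pow_succ_log_self (by omega) z⟩
  have hK_le : K ≤ v := by
    by_contra! h
    have := Nat.pow_le_pow_right (show 0 < q by omega) (show v + 1 ≤ K by omega)
    omega
  -- move the leading digit of `z` to the top position
  have hrot := hmax (m - (K + 1))
  rw [pow_pred_add_mul_pow_mod hq (by omega) hzK_lt] at hrot
  have hlow : q ^ (m - 1) ≤ z * q ^ (m - (K + 1)) := by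
    calc q ^ (m - 1) = q ^ K * q ^ (m - (K + 1)) := by rw [← pow_add]; congr 1; omega
      _ ≤ z * q ^ (m - (K + 1)) := Nat.mul_le_mul_right _ hzK_le
  -- the old top digit now sits at position `m - 2 - K`, below the leading digit of `z`
  have hK_ge : v ≤ K := by
    have : m - 1 - (K + 1) < K + 1 :=
      (Nat.pow_lt_pow_iff_right (show 1 < q by omega)).mp (by omega)
    omega
  obtain rfl : K = v := le_antisymm hK_le hK_ge
  have hqm : q ^ (m - 1) = q ^ v * q ^ (m - 1 - (v + 1) + 1) := by
    rw [← pow_add]; congr 1; omega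
  rw [show m - (v + 1) = m - 1 - (v + 1) + 1 by omega, hqm] at hrot
  have hz1 := le_pow_add_one_of_pow_add_mul_pow_succ_le hq (by omega) hrot
  -- `z` and `q ^ v` are both odd, which excludes `z = q ^ v + 1`
  obtain ⟨a, ha⟩ : Odd (q ^ v) := hq_odd.pow
  obtain ⟨b, hb⟩ := hz_odd
  omega

theorem two_mul_div_two_add_pow_add_pow (hq : 3 ≤ q) (hq_odd : Odd q) (hm : 2 ≤ m) {a b : ℕ}
    (ha : a < m) (hb : b < m) :
    2 * ((q ^ m - 1 - q ^ a - q ^ b) / 2) + (q ^ a + q ^ b) = q ^ m - 1 := by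
  have := pow_add_pow_lt hq hm ha hb
  obtain ⟨c, hc⟩ : Odd (q ^ m) := hq_odd.pow
  obtain ⟨c, hc⟩ : Odd (q ^ a) := hq_odd.pow
  obtain ⟨c, hc⟩ : Odd (q ^ b) := hq_odd.pow
  omega

theorem two_mul_mul_pow_mod_add_sub_mul_pow_mod {n s : ℕ} (hn : 2 * n = q ^ m - 1) (hs0 : 0 < s)
    (hsn : s < n) (j : ℕ) :
    2 * (s * q ^ j % n) + (q ^ m - 1 - 2 * s) * q ^ j % (q ^ m - 1) = q ^ m - 1 := by
  have hm : m ≠ 0 := by rintro rfl; simp at hn; omega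
  have hq : 0 < q := by have := (Nat.one_lt_pow_iff hm).mp (show 1 < q ^ m by omega); omega
  rw [← Nat.mul_mod_mul_left, ← mul_assoc, hn]
  refine mod_add_mod_eq_of_add_eq (by omega) fun hdvd => ?_
  have := Nat.le_of_dvd (by omega)
    (((coprime_pow_sub_one hq (Nat.pos_of_ne_zero hm)).pow_left j).symm.dvd_of_dvd_mul_right hdvd)
  omega

theorem le_mul_pow_mod_half_iff {n s : ℕ} (hn : 2 * n = q ^ m - 1) (hs0 : 0 < s) (hsn : s < n)
    (j : ℕ) :
    s ≤ s * q ^ j % n ↔ (q ^ m - 1 - 2 * s) * q ^ j % (q ^ m - 1) ≤ q ^ m - 1 - 2 * s := by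
  have := two_mul_mul_pow_mod_add_sub_mul_pow_mod hn hs0 hsn j
  omega

theorem mul_pow_mod_half_eq_iff {n s : ℕ} (hn : 2 * n = q ^ m - 1) (hs0 : 0 < s) (hsn : s < n)
    (j : ℕ) :
    s * q ^ j % n = s ↔ (q ^ m - 1 - 2 * s) * q ^ j % (q ^ m - 1) = q ^ m - 1 - 2 * s := by
  have := two_mul_mul_pow_mod_add_sub_mul_pow_mod hn hs0 hsn j
  omega

end Nat

/-- The second largest q-cyclotomic coset leader modulo n = (q^m-1)/2 is
δ₂ = (q^m - 1 - q^{m-1} - q^{⌊(m+1)/2⌋})/2, i.e. δ₂ is a coset leader, is less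
than δ₁, every coset leader s with δ₂ < s < n equals δ₁, and the q-cyclotomic
coset of δ₂ has size m. -/
theorem stmt_8 (q m n d1 d2 : ℕ) (hq : ∃ p k : ℕ, p.Prime ∧ 0 < k ∧ q = p ^ k)
    (hqodd : Odd q) (hm : 2 ≤ m)
    (hn : n = (q ^ m - 1) / 2)
    (hd1 : d1 = (q ^ m - 1 - q ^ (m - 1) - q ^ ((m - 1) / 2)) / 2)
    (hd2 : d2 = (q ^ m - 1 - q ^ (m - 1) - q ^ ((m + 1) / 2)) / 2) :
    (∀ j : ℕ, d2 ≤ d2 * q ^ j % n) ∧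
    d2 < d1 ∧
    (∀ s : ℕ, d2 < s → s < n → (∀ j : ℕ, s ≤ s * q ^ j % n) → s = d1) ∧
    IsLeast {l : ℕ | 0 < l ∧ d2 * q ^ l ≡ d2 [MOD n]} m := by
  have hq3 : 3 ≤ q := by
    obtain ⟨p, k, hp, hk, rfl⟩ := hq
    have := Nat.one_lt_pow hk.ne' hp.one_lt
    obtain ⟨c, hc⟩ := hqodd
    omega
  have h2n : 2 * n = q ^ m - 1 := by
    obtain ⟨c, hc⟩ : Odd (q ^ m) := hqodd.pow
    omega
  have hy1 := hd1 ▸ Nat.two_mul_div_two_add_pow_add_pow hq3 hqodd hm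
    (show m - 1 < m by omega) (show (m - 1) / 2 < m by omega)
  have hy2 := hd2 ▸ Nat.two_mul_div_two_add_pow_add_pow hq3 hqodd hm
    (show m - 1 < m by omega) (show (m + 1) / 2 < m by omega)
  have := Nat.pow_add_pow_lt hq3 hm (show m - 1 < m by omega) (show (m + 1) / 2 < m by omega)
  have := Nat.one_le_pow (m - 1) q (by omega)
  have hd2_pos : 0 < d2 := by omega
  have hd2_lt : d2 < n := by omega
  have hy2' : q ^ m - 1 - 2 * d2 = q ^ (m - 1) + q ^ ((m + 1) / 2) := by omega
  refine ⟨fun j => ?_, ?_, fun s hs hsn hlead => ?_, ⟨⟨by omega, ?_⟩, fun l ⟨hl0, hl⟩ => ?_⟩⟩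
  · rw [Nat.le_mul_pow_mod_half_iff h2n hd2_pos hd2_lt, hy2']
    exact Nat.pow_pred_add_pow_mul_pow_mod_le hq3 hm j
  · have : q ^ ((m - 1) / 2) < q ^ ((m + 1) / 2) := Nat.pow_lt_pow_right (by omega) (by omega)
    omega
  · have := Nat.eq_pow_pred_add_pow_of_forall_mul_pow_mod_le hq3 hqodd hm ⟨n - s, by omega⟩
      (by omega) (by omega) fun j => (Nat.le_mul_pow_mod_half_iff h2n (by omega) hsn j).mp (hlead j)
    omega
  · have hqm : q ^ m ≡ 1 [MOD n] :=
      Nat.ModEq.of_mul_left 2 (h2n ▸ Nat.pow_modEq_one_pow_sub_one (by omega))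
    simpa using hqm.mul_left d2
  · by_contra! hlm
    refine (Nat.pow_pred_add_pow_mul_pow_mod_lt hq3 hm hl0 hlm).ne ?_
    rw [← hy2', ← Nat.mul_pow_mod_half_eq_iff h2n hd2_pos hd2_lt]
    exact Eq.trans hl (Nat.mod_eq_of_lt hd2_lt)
end

section
/- Let q be an odd prime power and m ≥ 3 odd. The number of pairs (x,y) ∈ F_{q^m}² with x^{q^{(m-1)/2}+1} + y^{q^{(m-1)/2}+1} = 0 and x^{q^{(m-3)/2}+1} + y^{q^{(m-3)/2}+1} = 0 equals 2q^m - 1 if q ≡ 1 (mod 4), and equals 1 if q ≡ 3 (mod 4). -/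
/-!
With `u = x / y` and `b = (m - 3) / 2`, the two equations say `u ^ (q ^ (b + 1) + 1) = -1` and
`u ^ (q ^ b + 1) = -1`. Then `v = u ^ q ^ b` satisfies `u v = -1 = u v ^ q`, so `v` and hence
`u = -v⁻¹` are fixed by `· ^ q`; thus `v = u` and `u ^ 2 = -1`. Conversely `u ^ 2 = -1` gives back
both equations when `q ≡ 1 (mod 4)`, and since `m` is odd this is exactly when `-1` is a square in
`F`. So the solutions are those of `x ^ 2 + y ^ 2 = 0`: two lines `x = ± i y` meeting at the origin
if `-1 = i ^ 2` is a square, the origin alone otherwise.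
-/

open Finset

lemma Nat.pow_mod_four_of_odd {q m : ℕ} (hq : Odd q) (hm : Odd m) : q ^ m % 4 = q % 4 := by
  obtain ⟨k, rfl⟩ := hm
  rcases Nat.odd_mod_four_iff.mp (Nat.odd_iff.mp hq) with h | h <;>
    simp [Nat.pow_mod, pow_succ, pow_mul, Nat.mul_mod, h]

lemma pow_pow_eq_self_of_pow_eq_self {M : Type*} [Monoid M] {a : M} {q : ℕ} (h : a ^ q = a)
    (n : ℕ) : a ^ q ^ n = a := by
  induction n with
  | zero => rw [pow_zero, pow_one]
  | succ n ih => rw [pow_succ, pow_mul, ih, h]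

lemma add_pow_eq_zero_iff_div_pow {F : Type*} [Field F] {x y : F} (hy : y ≠ 0) (n : ℕ) :
    x ^ n + y ^ n = 0 ↔ (x / y) ^ n = -1 := by
  rw [div_pow, div_eq_iff (pow_ne_zero n hy), neg_one_mul, add_eq_zero_iff_eq_neg]

lemma sq_eq_neg_one_of_pow_pow_succ_add_one {F : Type*} [Field F] {q : ℕ} (hq : Odd q) {u : F}
    {b : ℕ} (h₁ : u ^ (q ^ (b + 1) + 1) = -1) (h₀ : u ^ (q ^ b + 1) = -1) : u ^ 2 = -1 := by
  set v := u ^ q ^ b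
  have hu : u ≠ 0 := by rintro rfl; simp [zero_pow] at h₀
  have huv : u * v = -1 := by rw [← h₀, pow_succ']
  have huvq : u * v ^ q = -1 := by rw [← h₁, pow_succ', pow_succ, pow_mul]
  have hvq : v ^ q = v := mul_left_cancel₀ hu (huvq.trans huv.symm)
  have hu_eq : u = -v⁻¹ :=
    neg_eq_iff_eq_neg.mp (eq_inv_of_mul_eq_one_left (by rw [neg_mul, huv, neg_neg]))
  have huq : u ^ q = u := by rw [hu_eq, hq.neg_pow, inv_pow, hvq]
  have hvu : v = u := pow_pow_eq_self_of_pow_eq_self huq b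
  rw [sq, ← huv, hvu]

lemma pow_eq_neg_one_of_sq_eq_neg_one {M : Type*} [Monoid M] [HasDistribNeg M] {u : M}
    (hu : u ^ 2 = -1) {n : ℕ} (hn : n % 4 = 2) : u ^ n = -1 := by
  have hodd : Odd (n / 2) := Nat.odd_iff.mpr (by omega)
  rw [← Nat.two_mul_div_two_of_even (by rw [Nat.even_iff]; omega : Even n), pow_mul, hu,
    hodd.neg_one_pow]

lemma pow_add_pow_eq_zero_and_iff_sq_add_sq_eq_zero {F : Type*} [Field F] {q : ℕ} (hq : Odd q)
    (hsq : IsSquare (-1 : F) → q % 4 = 1) (b : ℕ) (x y : F) :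
    (x ^ (q ^ (b + 1) + 1) + y ^ (q ^ (b + 1) + 1) = 0 ∧ x ^ (q ^ b + 1) + y ^ (q ^ b + 1) = 0) ↔
      x ^ 2 + y ^ 2 = 0 := by
  rcases eq_or_ne y 0 with rfl | hy
  · simp
  simp only [add_pow_eq_zero_iff_div_pow hy]
  refine ⟨fun ⟨h₁, h₀⟩ => sq_eq_neg_one_of_pow_pow_succ_add_one hq h₁ h₀, fun hu => ?_⟩
  have hq4 : q % 4 = 1 := hsq ⟨x / y, by rw [← sq, hu]⟩
  have hexp (n : ℕ) : (q ^ n + 1) % 4 = 2 := by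
    simp [Nat.add_mod, Nat.pow_mod, hq4]
  exact ⟨pow_eq_neg_one_of_sq_eq_neg_one hu (hexp _), pow_eq_neg_one_of_sq_eq_neg_one hu (hexp _)⟩

section SumOfTwoSquares

variable {F : Type*} [Field F] [Fintype F] [DecidableEq F]

lemma card_filter_sq_add_sq_eq_zero_of_not_isSquare (h : ¬IsSquare (-1 : F)) :
    #{xy : F × F | xy.1 ^ 2 + xy.2 ^ 2 = 0} = 1 := by
  rw [card_eq_one]
  refine ⟨(0, 0), eq_singleton_iff_unique_mem.mpr ⟨by simp, ?_⟩⟩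
  rintro ⟨x, y⟩ hxy
  rcases eq_or_ne y 0 with rfl | hy
  · simpa using hxy
  · refine absurd ⟨x / y, ?_⟩ h
    rw [← sq, ← (add_pow_eq_zero_iff_div_pow hy 2).mp (by simpa using hxy)]

lemma card_filter_sq_add_sq_eq_zero_of_sq_eq_neg_one (h2 : ringChar F ≠ 2) {i : F}
    (hi : i ^ 2 = -1) :
    #{xy : F × F | xy.1 ^ 2 + xy.2 ^ 2 = 0} = 2 * Fintype.card F - 1 := by
  let line (c : F) : Finset (F × F) := univ.image fun y => (c * y, y)
  have hline (c : F) : #(line c) = Fintype.card F :=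
    card_image_of_injective _ fun y y' h => (Prod.ext_iff.mp h).2
  have hunion :
      ({xy : F × F | xy.1 ^ 2 + xy.2 ^ 2 = 0} : Finset (F × F)) = line i ∪ line (-i) := by
    ext ⟨x, y⟩
    have : x ^ 2 + y ^ 2 = 0 ↔ x ^ 2 = (i * y) ^ 2 := by
      rw [mul_pow, hi, neg_one_mul, add_eq_zero_iff_eq_neg]
    simp [line, this, sq_eq_sq_iff_eq_or_eq_neg, eq_comm (b := y), eq_comm (a := x)]
  have hinter : line i ∩ line (-i) = {(0, 0)} := by
    have hi0 : i ≠ 0 := by rintro rfl; simp at hi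
    ext ⟨x, y⟩
    simp only [line, mem_inter, mem_image, mem_univ, true_and, Prod.mk.injEq, mem_singleton,
      exists_eq_right]
    constructor
    · rintro ⟨rfl, hx⟩
      have hy : y = 0 := by
        have : (2 * i) * y = 0 := by linear_combination -hx
        simpa [Ring.two_ne_zero h2, hi0] using this
      simp [hy]
    · rintro ⟨rfl, rfl⟩
      simp
  rw [hunion, card_union, hline, hline, hinter, card_singleton, two_mul]

lemma card_filter_sq_add_sq_eq_zero (h2 : ringChar F ≠ 2) :
    #{xy : F × F | xy.1 ^ 2 + xy.2 ^ 2 = 0} =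
      if IsSquare (-1 : F) then 2 * Fintype.card F - 1 else 1 := by
  split_ifs with h
  · obtain ⟨i, hi⟩ := h
    exact card_filter_sq_add_sq_eq_zero_of_sq_eq_neg_one h2 (by rw [sq, hi])
  · exact card_filter_sq_add_sq_eq_zero_of_not_isSquare h

end SumOfTwoSquares

theorem stmt_12_general (q m : ℕ)
    (hqodd : Odd q) (hm : 3 ≤ m) (hmodd : Odd m)
    (F : Type*) [Field F] [Fintype F] [DecidableEq F]
    (hF : Fintype.card F = q ^ m) :
    (Finset.univ.filter (fun xy : F × F =>
        xy.1 ^ (q ^ ((m - 1) / 2) + 1) + xy.2 ^ (q ^ ((m - 1) / 2) + 1) = 0 ∧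
        xy.1 ^ (q ^ ((m - 3) / 2) + 1) + xy.2 ^ (q ^ ((m - 3) / 2) + 1) = 0)).card
      = if q % 4 = 1 then 2 * q ^ m - 1 else 1 := by
  have hab : (m - 1) / 2 = (m - 3) / 2 + 1 := by have := Nat.odd_iff.mp hmodd; omega
  have hsq : IsSquare (-1 : F) ↔ q % 4 = 1 := by
    rw [FiniteField.isSquare_neg_one_iff, hF, Nat.pow_mod_four_of_odd hqodd hmodd]
    have := Nat.odd_mod_four_iff.mp (Nat.odd_iff.mp hqodd)
    omega
  have hchar : ringChar F ≠ 2 := by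
    rw [Ne, FiniteField.even_card_iff_char_two, hF, ← Nat.even_iff, Nat.not_even_iff_odd]
    exact hqodd.pow
  rw [hab, filter_congr fun xy _ =>
      pow_add_pow_eq_zero_and_iff_sq_add_sq_eq_zero hqodd hsq.mp _ xy.1 xy.2,
    card_filter_sq_add_sq_eq_zero hchar, hF]
  exact if_congr hsq rfl rfl

/-- The number of pairs (x,y) ∈ F_{q^m}² with
x^{q^{(m-1)/2}+1} + y^{q^{(m-1)/2}+1} = 0 and x^{q^{(m-3)/2}+1} + y^{q^{(m-3)/2}+1} = 0
equals 2q^m - 1 if q ≡ 1 (mod 4), and 1 if q ≡ 3 (mod 4). -/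
theorem stmt_12 (q m : ℕ) (hq : ∃ p k : ℕ, p.Prime ∧ 0 < k ∧ q = p ^ k)
    (hqodd : Odd q) (hm : 3 ≤ m) (hmodd : Odd m)
    (F : Type*) [Field F] [Fintype F] [DecidableEq F]
    (hF : Fintype.card F = q ^ m) :
    (Finset.univ.filter (fun xy : F × F =>
        xy.1 ^ (q ^ ((m - 1) / 2) + 1) + xy.2 ^ (q ^ ((m - 1) / 2) + 1) = 0 ∧
        xy.1 ^ (q ^ ((m - 3) / 2) + 1) + xy.2 ^ (q ^ ((m - 3) / 2) + 1) = 0)).card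
      = if q % 4 = 1 then 2 * q ^ m - 1 else 1 :=
  stmt_12_general q m hqodd hm hmodd F hF
end
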